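/- Let X be a smooth projective curve, P ≠ Q rational points, B a divisor, and define σ, τ : ℤ → ℤ by: B+iP+jQ ∈ Γ_P iff j ≥ σ(i), and B+iP+jQ ∈ Γ_Q iff i ≥ τ(j). Then D_B(P,Q) := {B+iP+jQ} ∩ D(P,Q) equals {B+iP+σ(i)Q : i ∈ ℤ} = {B+τ(j)P+jQ : j ∈ ℤ}, and σ and τ are mutually inverse bijections of ℤ. If moreover deg B = 0 then −i ≤ σ(i) ≤ 2g−i for all i, and if mP ∼ mQ then σ(i+m) = σ(i) − m. -/
import Mathlib


/-- An abstract model of a smooth projective curve `X` over a field: divisors are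
finitely supported `ℤ`-valued functions on the (closed) points, `l A` is the
dimension of the Riemann–Roch space `L(A)`, `K` is a canonical divisor, `g` is
the genus, and `lequiv` is linear equivalence of divisors.  The axioms record
the standard facts about Riemann–Roch spaces used in the paper. -/
structure AlgCurve where
  Point : Type
  g : ℕ
  K : Point →₀ ℤ
  l : (Point →₀ ℤ) → ℕ
  lequiv : (Point →₀ ℤ) → (Point →₀ ℤ) → Prop
  lequiv_refl : ∀ A, lequiv A A
  lequiv_symm : ∀ {A B}, lequiv A B → lequiv B A
  lequiv_trans : ∀ {A B C}, lequiv A B → lequiv B C → lequiv A C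
  lequiv_add : ∀ {A B} (C), lequiv A B → lequiv (A + C) (B + C)
  deg_lequiv : ∀ {A B}, lequiv A B → A.sum (fun _ n => n) = B.sum (fun _ n => n)
  l_lequiv : ∀ {A B}, lequiv A B → l A = l B
  /-- `l` vanishes on divisors of negative degree. -/
  l_neg : ∀ {A}, A.sum (fun _ n => n) < 0 → l A = 0
  l_zero_divisor : l 0 = 1
  /-- removing a point decreases `l` by at most one -/
  l_step : ∀ (A) (P : Point), l A ≤ l (A - Finsupp.single P 1) + 1
  l_mono : ∀ (A) (P : Point), l (A - Finsupp.single P 1) ≤ l A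
  /-- the Riemann–Roch theorem -/
  riemann_roch : ∀ A, (l A : ℤ) - l (K - A) = A.sum (fun _ n => n) + 1 - g

namespace AlgCurve

variable (X : AlgCurve)

/-- The degree of a divisor. -/
def deg (A : X.Point →₀ ℤ) : ℤ := A.sum fun _ n => n

/-- `A ∈ Γ_P`, i.e. `L(A) ≠ L(A − P)`: the class of `A` is effective with no
base point at `P`. -/
def Gamma (P : X.Point) (A : X.Point →₀ ℤ) : Prop :=
  X.l A ≠ X.l (A - Finsupp.single P 1)

/-- `A ∈ Δ_P(C)`, i.e. `L(A) ≠ L(A−P)` and `L(A−C) = L(A−C−P)`. -/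
def DeltaP (P : X.Point) (C A : X.Point →₀ ℤ) : Prop :=
  X.Gamma P A ∧ ¬ X.Gamma P (A - C)

/-- `γ_P(C)`: the minimal degree of a divisor `A` with `A ∈ Γ_P` and `A − C ∈ Γ_P`. -/
noncomputable def gammaP (P : X.Point) (C : X.Point →₀ ℤ) : ℤ :=
  sInf {d : ℤ | ∃ A, X.Gamma P A ∧ X.Gamma P (A - C) ∧ X.deg A = d}

end AlgCurve

open Finsupp

namespace AlgCurve
variable (X : AlgCurve)

lemma deg_add' (A C : X.Point →₀ ℤ) : X.deg (A + C) = X.deg A + X.deg C := by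
  simpa [deg] using Finsupp.sum_add_index' (by simp) (by simp)

lemma deg_single' (P : X.Point) (n : ℤ) : X.deg (Finsupp.single P n) = n := by
  simp [deg, Finsupp.sum_single_index]

lemma deg_sub' (A C : X.Point →₀ ℤ) : X.deg (A - C) = X.deg A - X.deg C := by
  have h := X.deg_add' (A - C) C
  rw [sub_add_cancel] at h
  omega

lemma deg_nonneg_of_gamma {P : X.Point} {A : X.Point →₀ ℤ} (h : X.Gamma P A) :
    0 ≤ X.deg A := by
  by_contra hc
  push_neg at hc
  have h1 : X.l A = 0 := X.l_neg hc
  have h2 : X.l (A - Finsupp.single P 1) = 0 := by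
    apply X.l_neg
    have := X.deg_sub' A (Finsupp.single P 1)
    rw [X.deg_single'] at this
    show X.deg _ < 0
    omega
  exact h (by rw [h1, h2])

lemma deg_K : X.deg X.K = 2 * (X.g : ℤ) - 2 := by
  have h0 := X.riemann_roch 0
  have hK := X.riemann_roch X.K
  simp [X.l_zero_divisor, Finsupp.sum_zero_index] at h0 hK
  show X.K.sum (fun _ n => n) = _
  omega

lemma gamma_of_big_deg {P : X.Point} {A : X.Point →₀ ℤ}
    (h : 2 * (X.g : ℤ) ≤ X.deg A) : X.Gamma P A := by
  have hK := X.deg_K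
  have hA := X.riemann_roch A
  have hA' := X.riemann_roch (A - Finsupp.single P 1)
  have hd : X.deg (A - Finsupp.single P 1) = X.deg A - 1 := by
    rw [X.deg_sub', X.deg_single']
  have h1 : X.l (X.K - A) = 0 := by
    apply X.l_neg
    have := X.deg_sub' X.K A
    show X.deg _ < 0
    omega
  have h2 : X.l (X.K - (A - Finsupp.single P 1)) = 0 := by
    apply X.l_neg
    have := X.deg_sub' X.K (A - Finsupp.single P 1)
    show X.deg _ < 0
    omega
  rw [h1] at hA
  rw [h2] at hA'
  change _ = X.deg A + 1 - X.g at hA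
  change _ = X.deg (A - Finsupp.single P 1) + 1 - X.g at hA'
  intro hc
  rw [hc] at hA
  omega

lemma gamma_lequiv {A A' : X.Point →₀ ℤ} (P : X.Point) (h : X.lequiv A A') :
    X.Gamma P A ↔ X.Gamma P A' := by
  have h1 := X.l_lequiv h
  have h2 := X.l_lequiv (X.lequiv_add (-Finsupp.single P 1) h)
  rw [← sub_eq_add_neg, ← sub_eq_add_neg] at h2
  unfold Gamma
  rw [h1, h2]

lemma delta_symm (P Q : X.Point) (A : X.Point →₀ ℤ) :
    X.DeltaP P (Finsupp.single Q 1) A ↔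
      X.Gamma Q A ∧ ¬ X.Gamma Q (A - Finsupp.single P 1) := by
  have hcomm : A - Finsupp.single Q 1 - Finsupp.single P 1
      = A - Finsupp.single P 1 - Finsupp.single Q 1 := sub_right_comm _ _ _
  have hab := X.l_step A P
  have hba := X.l_mono A P
  have hac := X.l_step A Q
  have hca := X.l_mono A Q
  have hbd := X.l_step (A - Finsupp.single P 1) Q
  have hdb := X.l_mono (A - Finsupp.single P 1) Q
  have hcd := X.l_step (A - Finsupp.single Q 1) P
  have hdc := X.l_mono (A - Finsupp.single Q 1) P
  rw [hcomm] at hcd hdc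
  unfold DeltaP Gamma
  rw [hcomm]
  omega

end AlgCurve

/-- The structure of `D_B(P,Q)` (Theorem in Section `S:Discrepancies`): with
`σ, τ : ℤ → ℤ` defined by `B+iP+jQ ∈ Γ_P ↔ j ≥ σ(i)` and
`B+iP+jQ ∈ Γ_Q ↔ i ≥ τ(j)`, the set `D_B(P,Q) = {B+iP+jQ} ∩ D(P,Q)` equals
`{B+iP+σ(i)Q : i ∈ ℤ} = {B+τ(j)P+jQ : j ∈ ℤ}`; `σ` and `τ` are mutually inverse
bijections of `ℤ`; if `deg B = 0` then `−i ≤ σ(i) ≤ 2g−i`; and if `mP ∼ mQ`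
then `σ(i+m) = σ(i) − m`. -/
theorem discrepancy_sigma_tau (X : AlgCurve) (P Q : X.Point) (hPQ : P ≠ Q)
    (B : X.Point →₀ ℤ) (σ τ : ℤ → ℤ)
    (hσ : ∀ i j : ℤ,
      X.Gamma P (B + Finsupp.single P i + Finsupp.single Q j) ↔ σ i ≤ j)
    (hτ : ∀ i j : ℤ,
      X.Gamma Q (B + Finsupp.single P i + Finsupp.single Q j) ↔ τ j ≤ i) :
    (∀ i j : ℤ,
      X.DeltaP P (Finsupp.single Q 1) (B + Finsupp.single P i + Finsupp.single Q j)
        ↔ j = σ i) ∧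
    (∀ i j : ℤ,
      X.DeltaP P (Finsupp.single Q 1) (B + Finsupp.single P i + Finsupp.single Q j)
        ↔ i = τ j) ∧
    (∀ i : ℤ, τ (σ i) = i) ∧ (∀ j : ℤ, σ (τ j) = j) ∧
    (X.deg B = 0 → ∀ i : ℤ, -i ≤ σ i ∧ σ i ≤ 2 * (X.g : ℤ) - i) ∧
    (∀ m : ℤ, X.lequiv (Finsupp.single P m) (Finsupp.single Q m) →
      ∀ i : ℤ, σ (i + m) = σ i - m) := by
  have e1 : ∀ i j : ℤ, (B + Finsupp.single P i + Finsupp.single Q j) - Finsupp.single Q 1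
      = B + Finsupp.single P i + Finsupp.single Q (j - 1) := by
    intro i j
    rw [Finsupp.single_sub]
    abel
  have e2 : ∀ i j : ℤ, (B + Finsupp.single P i + Finsupp.single Q j) - Finsupp.single P 1
      = B + Finsupp.single P (i - 1) + Finsupp.single Q j := by
    intro i j
    rw [Finsupp.single_sub]
    abel
  have part1 : ∀ i j : ℤ,
      X.DeltaP P (Finsupp.single Q 1) (B + Finsupp.single P i + Finsupp.single Q j)
        ↔ j = σ i := by
    intro i j
    unfold AlgCurve.DeltaP
    rw [e1, hσ i j, hσ i (j - 1)]
    omega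
  have part2 : ∀ i j : ℤ,
      X.DeltaP P (Finsupp.single Q 1) (B + Finsupp.single P i + Finsupp.single Q j)
        ↔ i = τ j := by
    intro i j
    rw [X.delta_symm, e2, hτ i j, hτ (i - 1) j]
    omega
  refine ⟨part1, part2, ?_, ?_, ?_, ?_⟩
  · intro i
    have := (part2 i (σ i)).mp ((part1 i (σ i)).mpr rfl)
    omega
  · intro j
    have := (part1 (τ j) j).mp ((part2 (τ j) j).mpr rfl)
    omega
  · intro hB i
    have hdeg : ∀ j : ℤ, X.deg (B + Finsupp.single P i + Finsupp.single Q j) = i + j := by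
      intro j
      rw [X.deg_add', X.deg_add', X.deg_single', X.deg_single', hB]
      ring
    constructor
    · have hg := (hσ i (σ i)).mpr le_rfl
      have := X.deg_nonneg_of_gamma hg
      rw [hdeg] at this
      omega
    · have hg : X.Gamma P (B + Finsupp.single P i + Finsupp.single Q (2 * (X.g : ℤ) - i)) := by
        apply X.gamma_of_big_deg
        rw [hdeg]
        omega
      have := (hσ i (2 * (X.g : ℤ) - i)).mp hg
      omega
  · intro m hm i
    have key : ∀ j : ℤ, σ (i + m) ≤ j ↔ σ i ≤ j + m := by
      intro j
      have hl : X.lequiv (B + Finsupp.single P (i + m) + Finsupp.single Q j)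
          (B + Finsupp.single P i + Finsupp.single Q (j + m)) := by
        have h := X.lequiv_add (B + Finsupp.single P i + Finsupp.single Q j) hm
        have eL : Finsupp.single P m + (B + Finsupp.single P i + Finsupp.single Q j)
            = B + Finsupp.single P (i + m) + Finsupp.single Q j := by
          rw [Finsupp.single_add]; abel
        have eR : Finsupp.single Q m + (B + Finsupp.single P i + Finsupp.single Q j)
            = B + Finsupp.single P i + Finsupp.single Q (j + m) := by
          rw [Finsupp.single_add]; abel
        rwa [eL, eR] at h
      rw [← hσ (i + m) j, ← hσ i (j + m)]
      exact X.gamma_lequiv P hl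
    have h1 := (key (σ i - m)).mpr (by omega)
    have h2 := (key (σ (i + m))).mp le_rfl
    omega
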